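/- Let α > −1 be a real number, N ≥ 1, and let 0 = z_0 < z_1 < … < z_N be real numbers. Then det_{i,j=1}^N [ ∫_{z_{i−1}}^{z_i} y^{j−1+α} dy ] = (∏_{k=1}^N z_k^{α+1}) Δ_N(z) / (α+1)_N. -/

import Mathlib

open MeasureTheory Real

noncomputable section

/-- The non-negative closed Weyl chamber `W_≥^N`. -/
def Wge (N : ℕ) : Set (Fin N → ℝ) :=
  {x | (∀ i j : Fin N, i ≤ j → x i ≤ x j) ∧ ∀ i, 0 ≤ x i}

/-- The strictly positive open Weyl chamber `Ẇ_≥^N`. -/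
def WgeOpen (N : ℕ) : Set (Fin N → ℝ) :=
  {x | (∀ i j : Fin N, i < j → x i < x j) ∧ ∀ i, 0 < x i}

/-- The Vandermonde determinant `Δ_N`. -/
def vdm {N : ℕ} (y : Fin N → ℝ) : ℝ :=
  ∏ p ∈ Finset.univ.filter fun p : Fin N × Fin N => p.1 < p.2, (y p.2 - y p.1)

/-- Pochhammer symbol `(a)_N = a (a+1) ⋯ (a+N-1)`. -/
def poch (a : ℝ) (N : ℕ) : ℝ := ∏ k ∈ Finset.range N, (a + k)

/-- The interlacing set `W_≥^{N,N}(z) = {y : 0 ≤ y₁ ≤ z₁ ≤ y₂ ≤ … ≤ y_N ≤ z_N}`. -/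
def interNN {N : ℕ} (z : Fin N → ℝ) : Set (Fin N → ℝ) :=
  {y | (∀ i, 0 ≤ y i) ∧ (∀ i, y i ≤ z i) ∧
    ∀ i : Fin N, ∀ h : (i : ℕ) + 1 < N, z i ≤ y ⟨(i : ℕ) + 1, h⟩}

/-- Density of the kernel `Λ_{α,N}^N(z, dy)` with respect to Lebesgue measure. -/
def lamNNdens (α : ℝ) {N : ℕ} (z y : Fin N → ℝ) : ℝ :=
  poch (α + 1) N * (∏ k, y k ^ α / z k ^ (α + 1)) * (vdm y / vdm z) *
    Set.indicator (interNN z) (fun _ => (1 : ℝ)) y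

/-- The `k`-th factor in the density of `Λ_{α,N}^{N+1}(x, dy)`
(with the conventions `x₀ = 0` and `y_{N+1} = +∞`). -/
def lamNp1factor (α : ℝ) {N : ℕ} (x : Fin (N + 1) → ℝ) (y : Fin N → ℝ) (i : Fin N) : ℝ :=
  Set.indicator
      (Set.Icc (if (i : ℕ) = 0 then 0 else x ⟨(i : ℕ) - 1, by have := i.isLt; omega⟩)
        (x i.succ)) (fun _ => (1 : ℝ)) (y i) *
    ∫ z in Set.Ioc (max (x i.castSucc) (y i))
        (if h : (i : ℕ) + 1 < N then min (x i.succ) (y ⟨(i : ℕ) + 1, h⟩) else x i.succ),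
      y i ^ α / z ^ (α + 1)

/-- Density of the kernel `Λ_{α,N}^{N+1}(x, dy)` with respect to Lebesgue measure. -/
def lamNp1dens (α : ℝ) {N : ℕ} (x : Fin (N + 1) → ℝ) (y : Fin N → ℝ) : ℝ :=
  (N.factorial : ℝ) * poch (α + 1) N * (vdm y / vdm x) * ∏ i, lamNp1factor α x y i

/-- The interlacing set `W_N^{N+1}(x) = {z : x₁ ≤ z₁ ≤ x₂ ≤ … ≤ z_N ≤ x_{N+1}}`. -/
def interGT {N : ℕ} (x : Fin (N + 1) → ℝ) : Set (Fin N → ℝ) :=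
  {z | ∀ i : Fin N, x i.castSucc ≤ z i ∧ z i ≤ x i.succ}

/-- Density of the kernel `Λ_N^{N+1}(x, dz)` with respect to Lebesgue measure. -/
def lamGTdens {N : ℕ} (x : Fin (N + 1) → ℝ) (z : Fin N → ℝ) : ℝ :=
  (N.factorial : ℝ) * (vdm z / vdm x) * Set.indicator (interGT x) (fun _ => (1 : ℝ)) z

/-!
Since `z₀ = 0`, replacing each row by the sum of the rows up to it turns the entries
`∫_{z_{i-1}}^{z_i} y^{j-1+α} dy` into `∫_0^{z_i} y^{j-1+α} dy = z_i^{j+α} / (α + j)` without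
changing the determinant. Pulling `z_i^{α+1}` out of row `i` and `1 / (α + j)` out of column `j`
leaves the Vandermonde matrix `(z_i^{j-1})`.
-/

lemma vdm_eq_det_vandermonde {N : ℕ} (y : Fin N → ℝ) :
    vdm y = (Matrix.vandermonde y).det := by
  rw [Matrix.det_vandermonde, vdm]
  exact Finset.prod_finset_product' (f := fun i j => y j - y i) _ Finset.univ
    (fun i => Finset.Ioi i) (fun p => by simp)

lemma poch_eq_prod_fin (a : ℝ) (N : ℕ) : poch a N = ∏ j : Fin N, (a + j) :=
  (Fin.prod_univ_eq_prod_range (fun k => a + k) N).symm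

lemma Matrix.det_of_sub_succ_castSucc {R : Type*} [CommRing R] {N : ℕ}
    (F : Fin (N + 1) → Fin N → R) (hF : F 0 = 0) :
    (Matrix.of fun i j => F i.succ j - F i.castSucc j).det =
      (Matrix.of fun i j => F i.succ j).det := by
  cases N with
  | zero => simp
  | succ n =>
    refine (Matrix.det_eq_of_forall_row_eq_smul_add_pred (fun _ => 1) (fun j => ?_)
      (fun i j => ?_)).symm
    · simp [hF]
    · simp only [Matrix.of_apply, Fin.succ_castSucc]
      ring

lemma Matrix.det_of_rpow_add_natCast_div {N : ℕ} (w : Fin N → ℝ) (hw : ∀ i, 0 < w i) (s : ℝ)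
    (c : Fin N → ℝ) :
    (Matrix.of fun i j : Fin N => w i ^ (s + j) / c j).det =
      (∏ i, w i ^ s) * vdm w / ∏ j, c j := by
  have hentry : (Matrix.of fun i j : Fin N => w i ^ (s + j) / c j) =
      Matrix.of fun i j =>
        (c j)⁻¹ * Matrix.of (fun i j => w i ^ s * Matrix.vandermonde w i j) i j := by
    ext i j
    rw [Matrix.of_apply, Matrix.of_apply, Matrix.of_apply, Matrix.vandermonde_apply,
      rpow_add (hw i), rpow_natCast, div_eq_inv_mul]
  rw [hentry, Matrix.det_mul_row, Matrix.det_mul_column, ← vdm_eq_det_vandermonde,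
    Finset.prod_inv_distrib]
  ring

lemma integral_rpow_eq_sub_div {a b r : ℝ} (hr : -1 < r) :
    ∫ y in a..b, y ^ r = b ^ (r + 1) / (r + 1) - a ^ (r + 1) / (r + 1) := by
  rw [integral_rpow (Or.inl hr), sub_div]

theorem stmt1_general {N : ℕ} (α : ℝ) (hα : -1 < α) (z : Fin (N + 1) → ℝ)
    (hz0 : z 0 = 0) (hz : StrictMono z) :
    Matrix.det (Matrix.of fun i j : Fin N =>
        ∫ y in (z i.castSucc)..(z i.succ), y ^ (((j : ℕ) : ℝ) + α)) =
      (∏ k : Fin N, z k.succ ^ (α + 1)) * vdm (fun k : Fin N => z k.succ) /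
        poch (α + 1) N := by
  have hexp : ∀ j : Fin N, -1 < ((j : ℕ) : ℝ) + α := fun j => by
    have : (0 : ℝ) ≤ (j : ℕ) := Nat.cast_nonneg _
    linarith
  set F : Fin (N + 1) → Fin N → ℝ :=
    fun k j => z k ^ (((j : ℕ) : ℝ) + α + 1) / (((j : ℕ) : ℝ) + α + 1)
  have hF0 : F 0 = 0 := funext fun j => by
    simp only [F, hz0, zero_rpow (by linarith [hexp j] : ((j : ℕ) : ℝ) + α + 1 ≠ 0),
      zero_div, Pi.zero_apply]
  have hF_eq : ∀ k j, F k j = z k ^ (α + 1 + (j : ℕ)) / (α + 1 + (j : ℕ)) := fun k j => by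
    simp only [F]; ring_nf
  simp_rw [integral_rpow_eq_sub_div (hexp _)]
  rw [Matrix.det_of_sub_succ_castSucc F hF0]
  simp_rw [hF_eq]
  rw [Matrix.det_of_rpow_add_natCast_div _ (fun k => hz0 ▸ hz (Fin.succ_pos k)),
    poch_eq_prod_fin]

/-- For `α > -1` and `0 = z₀ < z₁ < … < z_N`,
`det[∫_{z_{i-1}}^{z_i} y^{j-1+α} dy] = (∏ z_k^{α+1}) Δ_N(z) / (α+1)_N`. -/
theorem stmt1 {N : ℕ} (hN : 1 ≤ N) (α : ℝ) (hα : -1 < α) (z : Fin (N + 1) → ℝ)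
    (hz0 : z 0 = 0) (hz : StrictMono z) :
    Matrix.det (Matrix.of fun i j : Fin N =>
        ∫ y in (z i.castSucc)..(z i.succ), y ^ (((j : ℕ) : ℝ) + α)) =
      (∏ k : Fin N, z k.succ ^ (α + 1)) * vdm (fun k : Fin N => z k.succ) /
        poch (α + 1) N :=
  stmt1_general α hα z hz0 hz

end
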